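/- arXiv:1707.01567 — 2 statements merged into one kernel-verified Lean document; each statement's English description precedes it below -/
import Mathlib

section
/- Let $H$ be an RKHS with kernel $\kappa$ and let $\tilde f: [0,\infty)\to H$ and $x:[0,\infty)\to\Omega$ be such that for some $\gamma,\Delta,\delta>0$ and an increasing sequence $t_k\to\infty$: (a) $\|\tilde f(t_k)\|_H^2\ge\delta$ for all $k$, (b) the persistency bound $\gamma\,\|\tilde f(t_k)\|_H^2 \le \int_{t_k}^{t_k+\Delta}\langle \kappa_{x(\tau)}, \tilde f(t_k)\rangle_H^2\,d\tau$ holds for all $k$, and (c) $\tau\mapsto\kappa(x(\tau),x(\tau))$ is integrable on $(0,\infty)$ and $\sup_k \|\tilde f(t_k)\|_H < \infty$. Then a contradiction follows; hence under (b) and (c) with bounded $\|\tilde f(t)\|_H$, one has $\liminf_{t\to\infty}\|\tilde f(t)\|_H = 0$. -/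
open scoped RealInnerProductSpace

/-- Persistency of excitation contradiction: if the function error stays bounded away from zero
along a sequence of times tending to infinity, the PE lower bound holds, the diagonal kernel
function is integrable along the trajectory, and the error norms are uniformly bounded, then
a contradiction follows. -/
theorem stmt3 {Ω H : Type*} [NormedAddCommGroup H] [InnerProductSpace ℝ H]
    (κmap : Ω → H) (x : ℝ → Ω) (f : ℝ → H)
    (γ Δ δ : ℝ) (hγ : 0 < γ) (hΔ : 0 < Δ) (hδ : 0 < δ)
    (t : ℕ → ℝ) (ht0 : ∀ n, 0 ≤ t n) (hmono : StrictMono t)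
    (htop : Filter.Tendsto t Filter.atTop Filter.atTop)
    (ha : ∀ n, δ ≤ ‖f (t n)‖ ^ 2)
    (hb : ∀ n, γ * ‖f (t n)‖ ^ 2 ≤
      ∫ τ in (t n)..(t n + Δ), (⟪κmap (x τ), f (t n)⟫) ^ 2)
    (hint : MeasureTheory.IntegrableOn
      (fun τ => (⟪κmap (x τ), κmap (x τ)⟫)) (Set.Ioi 0))
    (M : ℝ) (hM : ∀ n, ‖f (t n)‖ ≤ M) :
    False := by
  set g : ℝ → ℝ := fun τ => (⟪κmap (x τ), κmap (x τ)⟫) with hgdef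
  have hii : ∀ c : ℝ, 0 ≤ c → IntervalIntegrable g MeasureTheory.volume 0 c := by
    intro c hc
    rw [intervalIntegrable_iff_integrableOn_Ioc_of_le hc]
    exact hint.mono_set Set.Ioc_subset_Ioi_self
  have key : ∀ n, γ * δ ≤
      M ^ 2 * ((∫ τ in (0:ℝ)..(t n + Δ), g τ) - ∫ τ in (0:ℝ)..(t n), g τ) := by
    intro n
    have hab : t n ≤ t n + Δ := by linarith
    have h1 : γ * δ ≤ ∫ τ in (t n)..(t n + Δ), (⟪κmap (x τ), f (t n)⟫) ^ 2 :=
      le_trans (by nlinarith [ha n]) (hb n)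
    have hsub : Set.Ioc (t n) (t n + Δ) ⊆ Set.Ioi (0:ℝ) := fun τ hτ =>
      lt_of_le_of_lt (ht0 n) hτ.1
    have hgint : MeasureTheory.IntegrableOn (fun τ => M ^ 2 * g τ)
        (Set.Ioc (t n) (t n + Δ)) := (hint.mono_set hsub).const_mul _
    have h2 : (∫ τ in (t n)..(t n + Δ), (⟪κmap (x τ), f (t n)⟫) ^ 2)
        ≤ ∫ τ in Set.Ioc (t n) (t n + Δ), M ^ 2 * g τ := by
      rw [intervalIntegral.integral_of_le hab]
      apply MeasureTheory.integral_mono_of_nonneg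
      · filter_upwards with τ; positivity
      · exact hgint
      · filter_upwards with τ
        have hcs := real_inner_mul_inner_self_le (κmap (x τ)) (f (t n))
        have hfn : ⟪f (t n), f (t n)⟫ = ‖f (t n)‖ ^ 2 := real_inner_self_eq_norm_sq _
        have hgn : (0:ℝ) ≤ g τ := real_inner_self_nonneg
        have hMn : ‖f (t n)‖ ≤ M := hM n
        have hfnn : (0:ℝ) ≤ ‖f (t n)‖ := norm_nonneg _
        have hM2 : ‖f (t n)‖ ^ 2 ≤ M ^ 2 := by nlinarith
        calc (⟪κmap (x τ), f (t n)⟫) ^ 2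
            = ⟪κmap (x τ), f (t n)⟫ * ⟪κmap (x τ), f (t n)⟫ := pow_two _
          _ ≤ g τ * ‖f (t n)‖ ^ 2 := by rw [← hfn]; exact hcs
          _ ≤ g τ * M ^ 2 := mul_le_mul_of_nonneg_left hM2 hgn
          _ = M ^ 2 * g τ := mul_comm _ _
    have h3 : (∫ τ in Set.Ioc (t n) (t n + Δ), M ^ 2 * g τ)
        = M ^ 2 * ((∫ τ in (0:ℝ)..(t n + Δ), g τ) - ∫ τ in (0:ℝ)..(t n), g τ) := by
      rw [← intervalIntegral.integral_of_le hab,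
        intervalIntegral.integral_const_mul,
        intervalIntegral.integral_interval_sub_left (hii _ (by linarith [ht0 n])) (hii _ (ht0 n))]
    linarith [h3 ▸ le_trans h1 h2]
  have hL1 := MeasureTheory.intervalIntegral_tendsto_integral_Ioi 0 hint htop
  have htop2 : Filter.Tendsto (fun n => t n + Δ) Filter.atTop Filter.atTop :=
    Filter.tendsto_atTop_add_const_right _ Δ htop
  have hL2 := MeasureTheory.intervalIntegral_tendsto_integral_Ioi 0 hint htop2
  have hlim : Filter.Tendsto
      (fun n => M ^ 2 * ((∫ τ in (0:ℝ)..(t n + Δ), g τ) - ∫ τ in (0:ℝ)..(t n), g τ))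
      Filter.atTop (nhds (M ^ 2 * ((∫ τ in Set.Ioi (0:ℝ), g τ) - ∫ τ in Set.Ioi (0:ℝ), g τ))) :=
    (hL2.sub hL1).const_mul _
  have : γ * δ ≤ M ^ 2 * ((∫ τ in Set.Ioi (0:ℝ), g τ) - ∫ τ in Set.Ioi (0:ℝ), g τ) :=
    ge_of_tendsto hlim (Filter.Eventually.of_forall key)
  nlinarith
end

section
/- With $H$, $\Pi_j$, $\Gamma$, $\Gamma_j$ as above and assuming $\sup_j\|\Gamma\Pi_j^*\Gamma_j^{-1}\Pi_j\| \le M < \infty$, for every $g\in H$ one has $\|(\Gamma^{-1} - \Pi_j^*\Gamma_j^{-1}\Pi_j)g\|_H \le \|\Gamma^{-1}\|\,(1+M)\,\|(I-\Pi_j)\|\,\|g\|_H$, so the operator difference tends to zero in operator norm whenever $\|I - \Pi_j\|\to 0$ on the relevant subspace. -/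
open scoped RealInnerProductSpace

/-- With orthogonal projections `P j`, self-adjoint positive definite invertible `Γ`,
`Γ_j = P j Γ P j` invertible on the subspace with inverse realized by `G j`, and a uniform
bound `‖Γ ∘ P j ∘ G j ∘ P j‖ ≤ M`, for every `g`:
`‖(Γ⁻¹ - P j G j P j) g‖ ≤ ‖Γ⁻¹‖ (1 + M) ‖I - P j‖ ‖g‖`. -/
theorem stmt6 {H : Type*} [NormedAddCommGroup H] [InnerProductSpace ℝ H]
    (P : ℕ → H →L[ℝ] H) (Γ Γinv : H →L[ℝ] H) (G : ℕ → H →L[ℝ] H)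
    (hPproj : ∀ j, (P j) ∘L (P j) = P j)
    (hPsa : ∀ j, ∀ f g : H, ⟪P j f, g⟫ = ⟪f, P j g⟫)
    (hΓsa : ∀ f g : H, ⟪Γ f, g⟫ = ⟪f, Γ g⟫)
    (hΓpos : ∀ f : H, f ≠ 0 → 0 < ⟪Γ f, f⟫)
    (hΓinv₁ : Γ ∘L Γinv = 1) (hΓinv₂ : Γinv ∘L Γ = 1)
    (hGrange : ∀ j h, P j (G j h) = G j h)
    (hGright : ∀ j h, P j h = h → P j (Γ (P j (G j h))) = h)
    (hGleft : ∀ j h, P j h = h → G j (P j (Γ (P j h))) = h)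
    (M : ℝ) (hM : ∀ j, ‖Γ ∘L (P j) ∘L (G j) ∘L (P j)‖ ≤ M) :
    ∀ j, ∀ g : H, ‖(Γinv - (P j) ∘L (G j) ∘L (P j)) g‖ ≤
      ‖Γinv‖ * (1 + M) * ‖(1 : H →L[ℝ] H) - P j‖ * ‖g‖ := by
  intro j g
  have hPP : P j (P j g) = P j g := by
    have := congrArg (fun T : H →L[ℝ] H => T g) (hPproj j)
    simpa using this
  set x : H := g - Γ (P j (G j (P j g))) with hxdef
  have hPx : P j x = 0 := by
    have h1 := hGright j (P j g) hPP
    simp [hxdef, map_sub, h1]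
  have heq : (Γinv - (P j) ∘L (G j) ∘L (P j)) g = Γinv x := by
    have h2 : Γinv (Γ (P j (G j (P j g)))) = P j (G j (P j g)) := by
      have := congrArg (fun T : H →L[ℝ] H => T (P j (G j (P j g)))) hΓinv₂
      simpa using this
    simp [hxdef, map_sub, h2]
  have hx1 : x = ((1 : H →L[ℝ] H) - P j) x := by
    simp [ContinuousLinearMap.sub_apply, hPx]
  have hM0 : 0 ≤ M := le_trans (norm_nonneg _) (hM j)
  have hxb : ‖x‖ ≤ (1 + M) * ‖g‖ := by
    have h3 : ‖Γ (P j (G j (P j g)))‖ ≤ M * ‖g‖ := by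
      have := (Γ ∘L (P j) ∘L (G j) ∘L (P j)).le_opNorm g
      have h4 : (Γ ∘L (P j) ∘L (G j) ∘L (P j)) g = Γ (P j (G j (P j g))) := rfl
      rw [h4] at this
      exact this.trans (mul_le_mul_of_nonneg_right (hM j) (norm_nonneg g))
    calc ‖x‖ ≤ ‖g‖ + ‖Γ (P j (G j (P j g)))‖ := norm_sub_le _ _
      _ ≤ ‖g‖ + M * ‖g‖ := by linarith
      _ = (1 + M) * ‖g‖ := by ring
  calc ‖(Γinv - (P j) ∘L (G j) ∘L (P j)) g‖ = ‖Γinv (((1 : H →L[ℝ] H) - P j) x)‖ := by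
        rw [heq, ← hx1]
    _ ≤ ‖Γinv‖ * ‖((1 : H →L[ℝ] H) - P j) x‖ := Γinv.le_opNorm _
    _ ≤ ‖Γinv‖ * (‖(1 : H →L[ℝ] H) - P j‖ * ‖x‖) :=
        mul_le_mul_of_nonneg_left (((1 : H →L[ℝ] H) - P j).le_opNorm x) (norm_nonneg _)
    _ ≤ ‖Γinv‖ * (‖(1 : H →L[ℝ] H) - P j‖ * ((1 + M) * ‖g‖)) := by
        apply mul_le_mul_of_nonneg_left _ (norm_nonneg _)
        exact mul_le_mul_of_nonneg_left hxb (norm_nonneg _)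
    _ = ‖Γinv‖ * (1 + M) * ‖(1 : H →L[ℝ] H) - P j‖ * ‖g‖ := by ring
end
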